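/- arXiv:1005.4877 — 8 statements merged into one kernel-verified Lean document; each statement's English description precedes it below -/
import Mathlib

section
/- Every SCF that satisfies set-monotonicity is weakly R̂-group-strategyproof: there is no feasible set A, group G of voters, and profiles R, R' with R_i = R'_i for all i ∉ G, I_i ⊆ I'_i for all i ∈ G (manipulators only misreport strict preferences), f(R',A) ≠ f(R,A), and f(R',A) R̂_i f(R,A) for all i ∈ G. -/
open scoped Classical

variable {U : Type*}

/-- A relation is complete (total). -/
def Complete (R : U → U → Prop) : Prop := ∀ a b : U, R a b ∨ R b a

/-- Strict part of a preference relation. -/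
def StrictPref (R : U → U → Prop) (a b : U) : Prop := R a b ∧ ¬ R b a

/-- Indifference part of a preference relation. -/
def Indiff (R : U → U → Prop) (a b : U) : Prop := R a b ∧ R b a

/-- Kelly's weak set extension: every element of `X` is weakly preferred to every element of `Y`. -/
def KellyR (R : U → U → Prop) (X Y : Finset U) : Prop := ∀ x ∈ X, ∀ y ∈ Y, R x y

/-- Kelly's strict set extension. -/
def KellyP (R : U → U → Prop) (X Y : Finset U) : Prop :=
  KellyR R X Y ∧ ∃ x ∈ X, ∃ y ∈ Y, StrictPref R x y

/-- A social choice function: for any number of voters, maps a preference profile and a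
feasible set to a nonempty subset of it, depending only on preferences restricted to it. -/
structure SCF (U : Type*) where
  choice : ∀ n : ℕ, (Fin n → U → U → Prop) → Finset U → Finset U
  choice_subset : ∀ n R A, choice n R A ⊆ A
  choice_nonempty : ∀ n (R : Fin n → U → U → Prop) (A : Finset U),
    A.Nonempty → (choice n R A).Nonempty
  iia : ∀ n (R R' : Fin n → U → U → Prop) (A : Finset U),
    (∀ i, ∀ a ∈ A, ∀ b ∈ A, R i a b ↔ R' i a b) → choice n R A = choice n R' A

/-- `R'` is obtained from `R` by weakly strengthening `a` against `b`:
either `R' = R`, or `R' = R ∪ {(a,b)}`, or `R' = (R \ {(b,a)}) ∪ {(a,b)}`. -/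
def weaklyStrengthens (R R' : U → U → Prop) (a b : U) : Prop :=
  (∀ x y, R' x y ↔ R x y) ∨
  (∀ x y, R' x y ↔ (R x y ∨ (x = a ∧ y = b))) ∨
  (∀ x y, R' x y ↔ ((R x y ∧ ¬(x = b ∧ y = a)) ∨ (x = a ∧ y = b)))

/-- Set-monotonicity: the choice set is invariant under weakening unchosen alternatives. -/
def SetMonotone (f : SCF U) : Prop :=
  ∀ (n : ℕ) (R R' : Fin n → U → U → Prop) (A : Finset U) (i : Fin n) (a b : U),
    (∀ j, Complete (R j)) → (∀ j, Complete (R' j)) → A.Nonempty →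
    a ∈ A → b ∈ A → b ∉ f.choice n R A →
    (∀ j, j ≠ i → R' j = R j) →
    weaklyStrengthens (R i) (R' i) a b →
    f.choice n R' A = f.choice n R A

/-- Strong monotonicity (Maskin-style). -/
def StrongMonotone (f : SCF U) : Prop :=
  ∀ (n : ℕ) (R R' : Fin n → U → U → Prop) (A : Finset U) (i : Fin n) (a b x : U),
    (∀ j, Complete (R j)) → (∀ j, Complete (R' j)) → A.Nonempty →
    a ∈ A → b ∈ A → b ≠ x → x ∈ f.choice n R A →
    (∀ j, j ≠ i → R' j = R j) →
    weaklyStrengthens (R i) (R' i) a b →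
    x ∈ f.choice n R' A

/-- Monotonicity: a chosen alternative stays chosen when it is weakly strengthened. -/
def MonotoneSCF (f : SCF U) : Prop :=
  ∀ (n : ℕ) (R R' : Fin n → U → U → Prop) (A : Finset U) (i : Fin n) (a b : U),
    (∀ j, Complete (R j)) → (∀ j, Complete (R' j)) → A.Nonempty →
    a ∈ A → b ∈ A → a ∈ f.choice n R A →
    (∀ j, j ≠ i → R' j = R j) →
    weaklyStrengthens (R i) (R' i) a b →
    a ∈ f.choice n R' A

/-- Independence of unchosen alternatives. -/
def IUA (f : SCF U) : Prop :=
  ∀ (n : ℕ) (R R' : Fin n → U → U → Prop) (A : Finset U),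
    (∀ j, Complete (R j)) → (∀ j, Complete (R' j)) → A.Nonempty →
    (∀ i : Fin n, ∀ a ∈ f.choice n R A, ∀ b ∈ A,
      (R i a b ↔ R' i a b) ∧ (R i b a ↔ R' i b a)) →
    f.choice n R' A = f.choice n R A

/-- Strong superset property: choice sets are invariant under removal of unchosen alternatives. -/
def SSP (f : SCF U) : Prop :=
  ∀ (n : ℕ) (R : Fin n → U → U → Prop) (A B : Finset U),
    (∀ j, Complete (R j)) → A.Nonempty →
    f.choice n R A ⊆ B → B ⊆ A →
    f.choice n R B = f.choice n R A

/-- Weak R̂-group-strategyproofness: no group can obtain a Kelly-weakly-preferred different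
choice set by misreporting only their strict preferences. -/
def WeakKellyGroupSP (f : SCF U) : Prop :=
  ¬ ∃ (n : ℕ) (R R' : Fin n → U → U → Prop) (A : Finset U) (G : Finset (Fin n)),
    (∀ j, Complete (R j)) ∧ (∀ j, Complete (R' j)) ∧ A.Nonempty ∧
    (∀ i, i ∉ G → R' i = R i) ∧
    (∀ i ∈ G, ∀ a b : U, Indiff (R i) a b → Indiff (R' i) a b) ∧
    f.choice n R' A ≠ f.choice n R A ∧
    (∀ i ∈ G, KellyR (R i) (f.choice n R' A) (f.choice n R A))

/-- Weak R̂-strategyproofness (single manipulator misreporting only strict preferences). -/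
def WeakKellySP (f : SCF U) : Prop :=
  ¬ ∃ (n : ℕ) (R R' : Fin n → U → U → Prop) (A : Finset U) (i : Fin n),
    (∀ j, Complete (R j)) ∧ (∀ j, Complete (R' j)) ∧ A.Nonempty ∧
    (∀ j, j ≠ i → R' j = R j) ∧
    (∀ a b : U, Indiff (R i) a b → Indiff (R' i) a b) ∧
    f.choice n R' A ≠ f.choice n R A ∧
    KellyR (R i) (f.choice n R' A) (f.choice n R A)

/-- Weak P̂-strategyproofness (single manipulator misreporting only strict preferences). -/
def WeakKellyPSP (f : SCF U) : Prop :=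
  ¬ ∃ (n : ℕ) (R R' : Fin n → U → U → Prop) (A : Finset U) (i : Fin n),
    (∀ j, Complete (R j)) ∧ (∀ j, Complete (R' j)) ∧ A.Nonempty ∧
    (∀ j, j ≠ i → R' j = R j) ∧
    (∀ a b : U, Indiff (R i) a b → Indiff (R' i) a b) ∧
    f.choice n R' A ≠ f.choice n R A ∧
    KellyP (R i) (f.choice n R' A) (f.choice n R A)

/-- Net majority margin of `a` against `b`. -/
noncomputable def margin {n : ℕ} (R : Fin n → U → U → Prop) (a b : U) : ℤ :=
  ((Finset.univ.filter fun i => StrictPref (R i) a b).card : ℤ) -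
  ((Finset.univ.filter fun i => StrictPref (R i) b a).card : ℤ)

/-- A pairwise SCF: the outcome depends only on the net pairwise majority margins. -/
def PairwiseSCF (f : SCF U) : Prop :=
  ∀ (n m : ℕ) (R : Fin n → U → U → Prop) (R' : Fin m → U → U → Prop) (A : Finset U),
    (∀ j, Complete (R j)) → (∀ j, Complete (R' j)) →
    (∀ a ∈ A, ∀ b ∈ A, margin R a b = margin R' a b) →
    f.choice n R A = f.choice m R' A

/-- Condorcet winner: beats every other feasible alternative in pairwise majority comparisons. -/
def CondorcetWinner {V : Type*} [Fintype V] (R : V → U → U → Prop) (A : Finset U)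
    (c : U) : Prop :=
  c ∈ A ∧ ∀ b ∈ A, b ≠ c →
    (Finset.univ.filter fun i => R i c b).card > (Finset.univ.filter fun i => R i b c).card

/-- A Condorcet extension uniquely selects the Condorcet winner whenever one exists. -/
def CondorcetExtension (f : SCF U) : Prop :=
  ∀ (n : ℕ) (R : Fin n → U → U → Prop) (A : Finset U) (c : U),
    (∀ j, Complete (R j)) → CondorcetWinner R A c → f.choice n R A = {c}

/-- A resolute SCF always chooses a single alternative. -/
def Resolute (f : SCF U) : Prop :=
  ∀ (n : ℕ) (R : Fin n → U → U → Prop) (A : Finset U),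
    (∀ j, Complete (R j)) → A.Nonempty → (f.choice n R A).card = 1


/-- Update profile `P` towards `Q` on the (unordered) pairs recorded in `S`. -/
noncomputable def updProf {U : Type*} {n : ℕ} (P Q : Fin n → U → U → Prop)
    (S : Finset (Fin n × U × U)) : Fin n → U → U → Prop :=
  fun j x y => if (j, x, y) ∈ S ∨ (j, y, x) ∈ S then Q j x y else P j x y

lemma chainLemma {U : Type*} (f : SCF U) (hf : SetMonotone f) {n : ℕ}
    (P Q : Fin n → U → U → Prop) (A : Finset U) (hAne : A.Nonempty)
    (hPc : ∀ j, Complete (P j)) (hQc : ∀ j, Complete (Q j))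
    (D : Finset (Fin n × U × U))
    (hD : ∀ i a b, (i, a, b) ∈ D → a ∈ A ∧ b ∈ A ∧ (i, b, a) ∉ D ∧
      ((P i a b ∧ ¬ P i b a ∧ Q i b a ∧ a ∉ f.choice n P A) ∨
       (Q i a b ∧ ¬ Q i b a ∧ P i b a ∧ b ∉ f.choice n P A))) :
    ∀ S ⊆ D, f.choice n (updProf P Q S) A = f.choice n P A := by
  classical
  have hcomp : ∀ S : Finset (Fin n × U × U), ∀ j, Complete (updProf P Q S j) := by
    intro S j x y
    by_cases h : (j, x, y) ∈ S ∨ (j, y, x) ∈ S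
    · simp only [updProf]
      rw [if_pos h, if_pos (Or.symm h)]
      exact hQc j x y
    · simp only [updProf]
      rw [if_neg h, if_neg (fun h' => h (Or.symm h'))]
      exact hPc j x y
  intro S
  induction S using Finset.induction_on with
  | empty =>
      intro _
      have h0 : updProf P Q (∅ : Finset (Fin n × U × U)) = P := by
        funext j x y; simp [updProf]
      rw [h0]
  | @insert t S' htS' ih =>
      intro hS
      obtain ⟨i, a, b⟩ := t
      have hmem : (i, a, b) ∈ D := hS (Finset.mem_insert_self _ _)
      have hS' : S' ⊆ D := fun u hu => hS (Finset.mem_insert_of_mem hu)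
      obtain ⟨haA, hbA, hbaD, hshape⟩ := hD i a b hmem
      have hIH := ih hS'
      have hbaS' : (i, b, a) ∉ S' := fun h => hbaD (hS' h)
      have habS' : (i, a, b) ∉ S' := htS'
      have hab_ne : a ≠ b := by
        rintro rfl
        rcases hshape with ⟨h1, h2, _⟩ | ⟨h1, h2, _⟩ <;> exact h2 h1
      have hnew_ab : updProf P Q (insert ((i, a, b) : Fin n × U × U) S') i a b = Q i a b := by
        simp only [updProf]; rw [if_pos (Or.inl (Finset.mem_insert_self _ _))]
      have hnew_ba : updProf P Q (insert ((i, a, b) : Fin n × U × U) S') i b a = Q i b a := by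
        simp only [updProf]; rw [if_pos (Or.inr (Finset.mem_insert_self _ _))]
      have hold_ab : updProf P Q S' i a b = P i a b := by
        simp only [updProf]
        rw [if_neg (by rintro (h | h); exacts [habS' h, hbaS' h])]
      have hold_ba : updProf P Q S' i b a = P i b a := by
        simp only [updProf]
        rw [if_neg (by rintro (h | h); exacts [hbaS' h, habS' h])]
      have huntouched : ∀ x y : U, ¬(x = a ∧ y = b) → ¬(x = b ∧ y = a) →
          updProf P Q (insert ((i, a, b) : Fin n × U × U) S') i x y = updProf P Q S' i x y := by
        intro x y h2 h1
        have e1 : ((i, x, y) ∈ insert ((i, a, b) : Fin n × U × U) S') ↔ (i, x, y) ∈ S' := by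
          rw [Finset.mem_insert]
          constructor
          · rintro (h | h)
            · rw [Prod.mk.injEq, Prod.mk.injEq] at h
              exact absurd ⟨h.2.1, h.2.2⟩ h2
            · exact h
          · exact Or.inr
        have e2 : ((i, y, x) ∈ insert ((i, a, b) : Fin n × U × U) S') ↔ (i, y, x) ∈ S' := by
          rw [Finset.mem_insert]
          constructor
          · rintro (h | h)
            · rw [Prod.mk.injEq, Prod.mk.injEq] at h
              exact absurd ⟨h.2.2, h.2.1⟩ h1
            · exact h
          · exact Or.inr
        simp only [updProf]
        by_cases hg : (i, x, y) ∈ S' ∨ (i, y, x) ∈ S'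
        · rw [if_pos (Or.imp e1.mpr e2.mpr hg), if_pos hg]
        · rw [if_neg (fun h => hg (Or.imp e1.mp e2.mp h)), if_neg hg]
      have hothers : ∀ j, j ≠ i →
          updProf P Q (insert ((i, a, b) : Fin n × U × U) S') j = updProf P Q S' j := by
        intro j hj
        funext x y
        have e1 : ∀ u v : U, ((j, u, v) ∈ insert ((i, a, b) : Fin n × U × U) S') ↔ (j, u, v) ∈ S' := by
          intro u v
          rw [Finset.mem_insert]
          constructor
          · rintro (h | h)
            · exact absurd (congrArg Prod.fst h) hj
            · exact h
          · exact Or.inr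
        simp only [updProf]
        by_cases hg : (j, x, y) ∈ S' ∨ (j, y, x) ∈ S'
        · rw [if_pos (Or.imp (e1 x y).mpr (e1 y x).mpr hg), if_pos hg]
        · rw [if_neg (fun h => hg (Or.imp (e1 x y).mp (e1 y x).mp h)), if_neg hg]
      rcases hshape with ⟨hPab, hPba, hQba, haX⟩ | ⟨hQab, hQba, hPba, hbX⟩
      · -- strengthen b against a; a is unchosen
        have key := hf n (updProf P Q S') (updProf P Q (insert (i, a, b) S')) A i b a
          (hcomp S') (hcomp _) hAne hbA haA
          (by rw [hIH]; exact haX)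
          hothers
          (by
            by_cases hq : Q i a b
            · right; left
              intro x y
              by_cases h2 : x = a ∧ y = b
              · obtain ⟨rfl, rfl⟩ := h2
                rw [hnew_ab, hold_ab]
                exact ⟨fun _ => Or.inl hPab, fun _ => hq⟩
              · by_cases h1 : x = b ∧ y = a
                · obtain ⟨rfl, rfl⟩ := h1
                  rw [hnew_ba]
                  simp [hQba]
                · rw [huntouched x y h2 h1]
                  constructor
                  · exact Or.inl
                  · rintro (h | h)
                    · exact h
                    · exact absurd h h1
            · right; right
              intro x y
              by_cases h2 : x = a ∧ y = b
              · obtain ⟨rfl, rfl⟩ := h2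
                rw [hnew_ab, hold_ab]
                simp [hq, hab_ne]
              · by_cases h1 : x = b ∧ y = a
                · obtain ⟨rfl, rfl⟩ := h1
                  rw [hnew_ba]
                  simp [hQba]
                · rw [huntouched x y h2 h1]
                  simp [h1, h2])
        rw [key, hIH]
      · -- strengthen a against b; b is unchosen
        have key := hf n (updProf P Q S') (updProf P Q (insert (i, a, b) S')) A i a b
          (hcomp S') (hcomp _) hAne haA hbA
          (by rw [hIH]; exact hbX)
          hothers
          (by
            right; right
            intro x y
            by_cases h2 : x = a ∧ y = b
            · obtain ⟨rfl, rfl⟩ := h2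
              rw [hnew_ab]
              simp [hQab]
            · by_cases h1 : x = b ∧ y = a
              · obtain ⟨rfl, rfl⟩ := h1
                rw [hnew_ba, hold_ba]
                simp [hQba, Ne.symm hab_ne]
              · rw [huntouched x y h2 h1]
                simp [h1, h2])
        rw [key, hIH]

/-- Every SCF satisfying set-monotonicity is weakly R̂-group-strategyproof. -/
theorem setMonotone_weakKellyGroupSP (f : SCF U) (hf : SetMonotone f) :
    WeakKellyGroupSP f := by
  rintro ⟨n, R, R', A, G, hRc, hR'c, hAne, hout, hind, hne, hkelly⟩
  classical
  set X := f.choice n R A with hXdef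
  set Y := f.choice n R' A with hYdef
  set D : Finset (Fin n × U × U) :=
    (G ×ˢ A ×ˢ A).filter (fun t => StrictPref (R t.1) t.2.1 t.2.2 ∧ R' t.1 t.2.2 t.2.1)
    with hDdef
  have hDmem : ∀ i a b, (i, a, b) ∈ D ↔
      (i ∈ G ∧ a ∈ A ∧ b ∈ A ∧ (StrictPref (R i) a b ∧ R' i b a)) := by
    intro i a b
    rw [hDdef]
    simp [Finset.mem_filter, Finset.mem_product, and_assoc]
  set D2 := D.filter (fun t => t.2.1 ∉ X) with hD2def
  set D1 := D.filter (fun t => t.2.1 ∈ X) with hD1def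
  have hsub1 : D1 ⊆ D := Finset.filter_subset _ _
  have hsub2 : D2 ⊆ D := Finset.filter_subset _ _
  have hcross : ∀ i a b, (i, a, b) ∈ D → (i, b, a) ∉ D := by
    intro i a b h h'
    have s1 := ((hDmem i a b).mp h).2.2.2.1
    have s2 := ((hDmem i b a).mp h').2.2.2.1
    exact s1.2 s2.1
  have hD1b : ∀ i a b, (i, a, b) ∈ D1 → b ∉ Y := by
    intro i a b h hbY
    have h' := Finset.mem_filter.mp h
    obtain ⟨hiG, haA, hbA, hsp, _⟩ := (hDmem i a b).mp h'.1
    exact hsp.2 (hkelly i hiG b hbY a h'.2)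
  have hchain2 : f.choice n (updProf R R' D2) A = X := by
    refine chainLemma f hf R R' A hAne hRc hR'c D2 ?_ D2 Finset.Subset.rfl
    intro i a b h
    have h' := Finset.mem_filter.mp h
    obtain ⟨hiG, haA, hbA, hsp, hr'⟩ := (hDmem i a b).mp h'.1
    refine ⟨haA, hbA, fun hb => hcross i a b h'.1 (hsub2 hb), ?_⟩
    exact Or.inl ⟨hsp.1, hsp.2, hr', h'.2⟩
  have hchain1 : f.choice n (updProf R' R D1) A = Y := by
    refine chainLemma f hf R' R A hAne hR'c hRc D1 ?_ D1 Finset.Subset.rfl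
    intro i a b h
    have h' := Finset.mem_filter.mp h
    obtain ⟨hiG, haA, hbA, hsp, hr'⟩ := (hDmem i a b).mp h'.1
    refine ⟨haA, hbA, fun hb => hcross i a b h'.1 (hsub1 hb), ?_⟩
    exact Or.inr ⟨hsp.1, hsp.2, hr', hD1b i a b h⟩
  have hDfull : ∀ t, t ∈ D → t ∈ D1 ∨ t ∈ D2 := by
    intro t ht
    by_cases h : t.2.1 ∈ X
    · exact Or.inl (Finset.mem_filter.mpr ⟨ht, h⟩)
    · exact Or.inr (Finset.mem_filter.mpr ⟨ht, h⟩)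
  have hdisj : ∀ j x y, ((j, x, y) ∈ D1 ∨ (j, y, x) ∈ D1) →
      ((j, x, y) ∈ D2 ∨ (j, y, x) ∈ D2) → False := by
    intro j x y h1 h2
    rcases h1 with h1 | h1 <;> rcases h2 with h2 | h2
    · exact (Finset.mem_filter.mp h2).2 (Finset.mem_filter.mp h1).2
    · exact hcross j x y (hsub1 h1) (hsub2 h2)
    · exact hcross j y x (hsub1 h1) (hsub2 h2)
    · exact (Finset.mem_filter.mp h2).2 (Finset.mem_filter.mp h1).2
  have hagree : ∀ j x y, x ∈ A → y ∈ A → (j, x, y) ∉ D → (j, y, x) ∉ D →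
      (R j x y ↔ R' j x y) := by
    intro j x y hx hy hnd1 hnd2
    by_cases hjG : j ∈ G
    · rcases hRc j x y with hxy | hyx
      · by_cases hyx' : R j y x
        · have hi := hind j hjG x y ⟨hxy, hyx'⟩
          exact ⟨fun _ => hi.1, fun _ => hxy⟩
        · have hnr' : ¬ R' j y x := fun h =>
            hnd1 ((hDmem j x y).mpr ⟨hjG, hx, hy, ⟨hxy, hyx'⟩, h⟩)
          have hx' : R' j x y := (hR'c j x y).resolve_right hnr'
          exact ⟨fun _ => hx', fun _ => hxy⟩
      · by_cases hxy' : R j x y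
        · have hi := hind j hjG x y ⟨hxy', hyx⟩
          exact ⟨fun _ => hi.1, fun _ => hxy'⟩
        · have hnr' : ¬ R' j x y := fun h =>
            hnd2 ((hDmem j y x).mpr ⟨hjG, hy, hx, ⟨hyx, hxy'⟩, h⟩)
          exact ⟨fun h => absurd h hxy', fun h => absurd h hnr'⟩
    · rw [hout j hjG]
  have hiia : f.choice n (updProf R' R D1) A = f.choice n (updProf R R' D2) A := by
    apply f.iia
    intro j x hx y hy
    simp only [updProf]
    by_cases h1 : (j, x, y) ∈ D1 ∨ (j, y, x) ∈ D1
    · rw [if_pos h1, if_neg (fun h2 => hdisj j x y h1 h2)]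
    · rw [if_neg h1]
      by_cases h2 : (j, x, y) ∈ D2 ∨ (j, y, x) ∈ D2
      · rw [if_pos h2]
      · rw [if_neg h2]
        have nd1 : (j, x, y) ∉ D := fun h =>
          (hDfull _ h).elim (fun h' => h1 (Or.inl h')) (fun h' => h2 (Or.inl h'))
        have nd2 : (j, y, x) ∉ D := fun h =>
          (hDfull _ h).elim (fun h' => h1 (Or.inr h')) (fun h' => h2 (Or.inr h'))
        exact (hagree j x y hx hy nd1 nd2).symm
  exact hne (by rw [← hchain1, hiia, hchain2])
end

section
/- If an SCF satisfies strong monotonicity and independence of unchosen alternatives (IUA), then it satisfies set-monotonicity. -/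
open scoped Classical

variable {U : Type*}

/-- Off the pairs `(a,b)` and `(b,a)`, a weak strengthening does not change the relation. -/
lemma weaklyStrengthens_agree_off {R R' : U → U → Prop} {a b : U}
    (h : weaklyStrengthens R R' a b) :
    ∀ x y, ¬(x = a ∧ y = b) → ¬(x = b ∧ y = a) → (R x y ↔ R' x y) := by
  intro x y h1 h2
  rcases h with h | h | h <;> rw [h x y] <;> tauto

/-- Reversal: if `R'` weakly strengthens `a` against `b` in `R` and `R` is complete,
then `R` weakly strengthens `b` against `a` in `R'`. -/
lemma weaklyStrengthens_reverse {R R' : U → U → Prop} {a b : U}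
    (hc : Complete R) (h : weaklyStrengthens R R' a b) :
    weaklyStrengthens R' R b a := by
  rcases h with h | h | h
  · exact Or.inl (fun x y => (h x y).symm)
  · by_cases hab : R a b
    · refine Or.inl fun x y => ?_
      rw [h x y]
      constructor
      · exact Or.inl
      · rintro (h' | ⟨rfl, rfl⟩)
        · exact h'
        · exact hab
    · have hba : R b a := (hc a b).resolve_left hab
      have hne : a ≠ b := by rintro rfl; exact hab ((hc a a).elim id id)
      refine Or.inr (Or.inr fun x y => ?_)
      rw [h x y]
      constructor
      · intro hr
        by_cases hx : x = b ∧ y = a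
        · tauto
        · left
          refine ⟨Or.inl hr, ?_⟩
          rintro ⟨rfl, rfl⟩; exact hab hr
      · rintro (⟨(h' | ⟨rfl, rfl⟩), h2⟩ | ⟨rfl, rfl⟩)
        · exact h'
        · exact absurd ⟨rfl, rfl⟩ h2
        · exact hba
  · by_cases hab : R a b
    · by_cases hba : R b a
      · -- R = R' ∪ {(b,a)}
        refine Or.inr (Or.inl fun x y => ?_)
        rw [h x y]
        constructor
        · intro hr
          by_cases hx : x = b ∧ y = a
          · tauto
          · left; left; exact ⟨hr, hx⟩
        · rintro ((⟨h', _⟩ | ⟨rfl, rfl⟩) | ⟨rfl, rfl⟩)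
          · exact h'
          · exact hab
          · exact hba
      · -- R' = R
        refine Or.inl fun x y => ?_
        rw [h x y]
        constructor
        · intro hr
          by_cases hx : x = a ∧ y = b
          · exact Or.inr hx
          · left
            refine ⟨hr, ?_⟩
            rintro ⟨rfl, rfl⟩; exact hba hr
        · rintro (⟨h', _⟩ | ⟨rfl, rfl⟩)
          · exact h'
          · exact hab
    · have hba : R b a := (hc a b).resolve_left hab
      have hne : a ≠ b := by rintro rfl; exact hab ((hc a a).elim id id)
      -- R = (R' \ {(a,b)}) ∪ {(b,a)}
      refine Or.inr (Or.inr fun x y => ?_)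
      rw [h x y]
      constructor
      · intro hr
        by_cases hx : x = b ∧ y = a
        · tauto
        · left
          constructor
          · left
            refine ⟨hr, hx⟩
          · rintro ⟨rfl, rfl⟩; exact hab hr
      · rintro (⟨(⟨h', _⟩ | ⟨rfl, rfl⟩), h2⟩ | ⟨rfl, rfl⟩)
        · exact h'
        · exact absurd ⟨rfl, rfl⟩ h2
        · exact hba

/-- Strong monotonicity and IUA imply set-monotonicity. -/
theorem strongMonotone_iua_setMonotone (f : SCF U)
    (h1 : StrongMonotone f) (h2 : IUA f) : SetMonotone f := by
  intro n R R' A i a b hcR hcR' hA ha hb hbf hoth hws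
  have hrev : weaklyStrengthens (R' i) (R i) b a := weaklyStrengthens_reverse (hcR i) hws
  by_cases haf : a ∈ f.choice n R A
  · apply Finset.Subset.antisymm
    · intro x hx
      by_cases hxa : x = a
      · exact hxa ▸ haf
      · exact h1 n R' R A i b a x hcR' hcR hA hb ha (fun h => hxa h.symm) hx
          (fun j hj => (hoth j hj).symm) hrev
    · intro x hx
      exact h1 n R R' A i a b x hcR hcR' hA ha hb (fun h => hbf (h ▸ hx)) hx hoth hws
  · apply h2 n R R' A hcR hcR' hA
    intro j x hxf y hyA
    have hxa : x ≠ a := fun h => haf (h ▸ hxf)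
    have hxb : x ≠ b := fun h => hbf (h ▸ hxf)
    by_cases hj : j = i
    · subst hj
      constructor
      · exact weaklyStrengthens_agree_off hws x y (fun h => hxa h.1) (fun h => hxb h.1)
      · exact weaklyStrengthens_agree_off hws y x (fun h => hxb h.2) (fun h => hxa h.2)
    · rw [hoth j hj]
      exact ⟨Iff.rfl, Iff.rfl⟩
end

section
/- Every SCF satisfying set-monotonicity satisfies monotonicity: if a ∈ f(R,A), R' agrees with R except for voter i, and R'_i ∈ R_i^{(a,b)} for some b ∈ A, then a ∈ f(R',A). -/
open scoped Classical

variable {U : Type*}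

lemma weaklyStrengthens_symm (R R' : U → U → Prop) (a b : U) (hR : Complete R)
    (h : weaklyStrengthens R R' a b) : weaklyStrengthens R' R b a := by
  rcases h with h | h | h
  · exact Or.inl fun x y => (h x y).symm
  · by_cases hab : R a b
    · refine Or.inl fun x y => ?_
      rw [h]
      constructor
      · intro hxy; exact Or.inl hxy
      · rintro (hxy | ⟨rfl, rfl⟩); exacts [hxy, hab]
    · have hba : R b a := (hR a b).resolve_left hab
      have hne : a ≠ b := by rintro rfl; exact hab hba
      refine Or.inr (Or.inr fun x y => ?_)
      constructor
      · intro hxy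
        by_cases hx : x = a ∧ y = b
        · obtain ⟨rfl, rfl⟩ := hx; exact absurd hxy hab
        · exact Or.inl ⟨(h x y).mpr (Or.inl hxy), hx⟩
      · rintro (⟨hxy', hne'⟩ | ⟨rfl, rfl⟩)
        · exact ((h x y).mp hxy').resolve_right hne'
        · exact hba
  · by_cases heq : a = b
    · subst heq
      have haa : R a a := (hR a a).elim id id
      refine Or.inl fun x y => ?_
      by_cases hx : x = a ∧ y = a
      · obtain ⟨rfl, rfl⟩ := hx
        simp [h, haa]
      · rw [h]; tauto
    · by_cases hab : R a b
      · by_cases hba : R b a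
        · -- R' = R with (b,a) removed and (a,b) kept; R = R' ∪ {(b,a)}
          refine Or.inr (Or.inl fun x y => ?_)
          rw [h]
          constructor
          · intro hxy
            by_cases hx : x = b ∧ y = a
            · exact Or.inr hx
            · exact Or.inl (Or.inl ⟨hxy, hx⟩)
          · rintro ((⟨hxy, _⟩ | ⟨rfl, rfl⟩) | ⟨rfl, rfl⟩)
            exacts [hxy, hab, hba]
        · -- R' = R pointwise
          refine Or.inl fun x y => ?_
          rw [h]
          constructor
          · intro hxy
            by_cases hx : x = b ∧ y = a
            · obtain ⟨rfl, rfl⟩ := hx; exact absurd hxy hba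
            · exact Or.inl ⟨hxy, hx⟩
          · rintro (⟨hxy, _⟩ | ⟨rfl, rfl⟩)
            exacts [hxy, hab]
      · have hba : R b a := (hR a b).resolve_left hab
        refine Or.inr (Or.inr fun x y => ?_)
        rw [h]
        constructor
        · intro hxy
          by_cases hx : x = b ∧ y = a
          · exact Or.inr hx
          · by_cases hx' : x = a ∧ y = b
            · obtain ⟨rfl, rfl⟩ := hx'; exact absurd hxy hab
            · exact Or.inl ⟨Or.inl ⟨hxy, hx⟩, hx'⟩
        · rintro (⟨(⟨hxy, _⟩ | ⟨rfl, rfl⟩), hne'⟩ | ⟨rfl, rfl⟩)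
          · exact hxy
          · exact absurd ⟨rfl, rfl⟩ hne'
          · exact hba

/-- Set-monotonicity implies monotonicity. -/
theorem setMonotone_monotone (f : SCF U) (hf : SetMonotone f) : MonotoneSCF f := by
  intro n R R' A i a b hC hC' hA ha hb haf hji hws
  by_contra hnot
  have hsym := weaklyStrengthens_symm (R i) (R' i) a b (hC i) hws
  have := hf n R' R A i b a hC' hC hA hb ha hnot
    (fun j hj => (hji j hj).symm) hsym
  rw [this] at haf
  exact hnot haf
end

section
/- Every SCF satisfying set-monotonicity satisfies independence of unchosen alternatives (IUA): if profiles R and R' agree, for all voters, on every pair {a,b} with a ∈ f(R,A) and b ∈ A, then f(R,A) = f(R',A). -/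
open scoped Classical

variable {U : Type*}

/-- Auxiliary: modify `Ss` to agree with `Rr` on the pair `{b,c}`. -/
def tweak (Rr Ss : U → U → Prop) (b c : U) : U → U → Prop :=
  fun x y => if (x = b ∧ y = c) ∨ (x = c ∧ y = b) then Rr x y else Ss x y

lemma tweak_bc (Rr Ss : U → U → Prop) (b c : U) : tweak Rr Ss b c b c ↔ Rr b c := by
  simp [tweak]

lemma tweak_cb (Rr Ss : U → U → Prop) (b c : U) : tweak Rr Ss b c c b ↔ Rr c b := by
  simp [tweak]

lemma tweak_off (Rr Ss : U → U → Prop) (b c x y : U)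
    (h : ¬((x = b ∧ y = c) ∨ (x = c ∧ y = b))) : tweak Rr Ss b c x y ↔ Ss x y := by
  simp [tweak, h]

lemma setMonotone_key (f : SCF U) (hf : SetMonotone f) (n : ℕ) (R : Fin n → U → U → Prop)
    (A : Finset U) (hR : ∀ j, Complete (R j)) (hA : A.Nonempty) :
    ∀ (k : ℕ) (S : Fin n → U → U → Prop), (∀ j, Complete (S j)) →
      (∀ i x y, ¬(x ∈ A ∧ y ∈ A ∧ x ∉ f.choice n R A ∧ y ∉ f.choice n R A) →
        (S i x y ↔ R i x y)) →
      ((Finset.univ ×ˢ A ×ˢ A).filter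
        (fun p : Fin n × U × U => ¬(S p.1 p.2.1 p.2.2 ↔ R p.1 p.2.1 p.2.2))).card = k →
      f.choice n S A = f.choice n R A := by
  intro k
  induction k using Nat.strong_induction_on with
  | _ k ih =>
  intro S hS hinv hcard
  by_cases hD : ((Finset.univ ×ˢ A ×ˢ A).filter
      (fun p : Fin n × U × U => ¬(S p.1 p.2.1 p.2.2 ↔ R p.1 p.2.1 p.2.2))) = ∅
  · -- base case: S and R agree on A
    apply f.iia
    intro i a ha b hb
    by_contra hne
    have hmem : (⟨i, a, b⟩ : Fin n × U × U) ∈ ((Finset.univ ×ˢ A ×ˢ A).filter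
        (fun p : Fin n × U × U => ¬(S p.1 p.2.1 p.2.2 ↔ R p.1 p.2.1 p.2.2))) := by
      refine Finset.mem_filter.mpr ⟨?_, hne⟩
      simp [Finset.mem_product, ha, hb]
    rw [hD] at hmem
    exact absurd hmem (Finset.notMem_empty _)
  · obtain ⟨⟨i, b, c⟩, hp⟩ := Finset.nonempty_iff_ne_empty.mpr hD
    rw [Finset.mem_filter] at hp
    obtain ⟨hmem, hne⟩ := hp
    simp only [Finset.mem_product, Finset.mem_univ, true_and] at hmem
    obtain ⟨hb, hc⟩ := hmem
    have hbc4 : b ∈ A ∧ c ∈ A ∧ b ∉ f.choice n R A ∧ c ∉ f.choice n R A := by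
      by_contra h
      exact hne (hinv i b c h)
    have hbnec : b ≠ c := by
      rintro rfl
      have h1 : S i b b := (hS i b b).elim id id
      have h2 : R i b b := (hR i b b).elim id id
      exact hne (iff_of_true h1 h2)
    set T : Fin n → U → U → Prop :=
      fun j => if j = i then tweak (R i) (S i) b c else S j with hTdef
    have hTi : T i = tweak (R i) (S i) b c := if_pos rfl
    have hTj : ∀ j, j ≠ i → T j = S j := fun j hj => if_neg hj
    have hT : ∀ j, Complete (T j) := by
      intro j x y
      by_cases hj : j = i
      · subst hj
        rw [hTi]
        by_cases h1 : (x = b ∧ y = c) ∨ (x = c ∧ y = b)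
        · have h2 : (y = b ∧ x = c) ∨ (y = c ∧ x = b) :=
            h1.elim (fun h => Or.inr ⟨h.2, h.1⟩) (fun h => Or.inl ⟨h.2, h.1⟩)
          simp only [tweak, if_pos h1, if_pos h2]
          exact hR j x y
        · have h2 : ¬((y = b ∧ x = c) ∨ (y = c ∧ x = b)) :=
            fun h => h1 (h.elim (fun hh => Or.inr ⟨hh.2, hh.1⟩) (fun hh => Or.inl ⟨hh.2, hh.1⟩))
          simp only [tweak, if_neg h1, if_neg h2]
          exact hS j x y
      · rw [hTj j hj]; exact hS j x y
    have hinvT : ∀ j x y, ¬(x ∈ A ∧ y ∈ A ∧ x ∉ f.choice n R A ∧ y ∉ f.choice n R A) →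
        (T j x y ↔ R j x y) := by
      intro j x y h
      by_cases hj : j = i
      · subst hj
        rw [hTi]
        by_cases h1 : (x = b ∧ y = c) ∨ (x = c ∧ y = b)
        · simp only [tweak, if_pos h1]
        · rw [tweak_off _ _ _ _ _ _ h1]
          exact hinv j x y h
      · rw [hTj j hj]; exact hinv j x y h
    -- card decreases
    have hsub : ((Finset.univ ×ˢ A ×ˢ A).filter
        (fun p : Fin n × U × U => ¬(T p.1 p.2.1 p.2.2 ↔ R p.1 p.2.1 p.2.2))) ⊂
        ((Finset.univ ×ˢ A ×ˢ A).filter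
        (fun p : Fin n × U × U => ¬(S p.1 p.2.1 p.2.2 ↔ R p.1 p.2.1 p.2.2))) := by
      constructor
      · intro p hp
        rw [Finset.mem_filter] at hp ⊢
        refine ⟨hp.1, ?_⟩
        intro hSR
        apply hp.2
        obtain ⟨j, x, y⟩ := p
        by_cases hj : j = i
        · subst hj
          rw [hTi]
          by_cases h1 : (x = b ∧ y = c) ∨ (x = c ∧ y = b)
          · simp only [tweak, if_pos h1]
          · rw [tweak_off _ _ _ _ _ _ h1]; exact hSR
        · rw [hTj j hj]; exact hSR
      · intro hsup
        have : (⟨i, b, c⟩ : Fin n × U × U) ∈ ((Finset.univ ×ˢ A ×ˢ A).filter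
            (fun p : Fin n × U × U => ¬(T p.1 p.2.1 p.2.2 ↔ R p.1 p.2.1 p.2.2))) := by
          apply hsup
          rw [Finset.mem_filter]
          exact ⟨by simp [Finset.mem_product, hb, hc], hne⟩
        rw [Finset.mem_filter] at this
        apply this.2
        show T i b c ↔ R i b c
        rw [hTi, tweak_bc]
    have hlt : ((Finset.univ ×ˢ A ×ˢ A).filter
        (fun p : Fin n × U × U => ¬(T p.1 p.2.1 p.2.2 ↔ R p.1 p.2.1 p.2.2))).card < k := by
      rw [← hcard]
      exact Finset.card_lt_card hsub
    have hIH : f.choice n T A = f.choice n R A :=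
      ih _ hlt T hT hinvT rfl
    have hStep : f.choice n S A = f.choice n T A := by
      have hTbc : T i b c ↔ R i b c := by rw [hTi, tweak_bc]
      have hTcb : T i c b ↔ R i c b := by rw [hTi, tweak_cb]
      have hToff : ∀ x y, ¬((x = b ∧ y = c) ∨ (x = c ∧ y = b)) → (T i x y ↔ S i x y) := by
        intro x y h
        rw [hTi, tweak_off _ _ _ _ _ _ h]
      by_cases h1 : S i b c
      · by_cases h2 : S i c b
        · -- both true; R i b c is false, so R i c b true; "add (b,c)"
          have hRbc : ¬ R i b c := fun h => hne (iff_of_true h1 h)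
          have hRcb : R i c b := (hR i b c).resolve_left hRbc
          have hws : weaklyStrengthens (T i) (S i) b c := by
            right; left
            intro x y
            by_cases hx1 : x = b ∧ y = c
            · obtain ⟨rfl, rfl⟩ := hx1
              exact iff_of_true h1 (Or.inr ⟨rfl, rfl⟩)
            · by_cases hx2 : x = c ∧ y = b
              · obtain ⟨rfl, rfl⟩ := hx2
                constructor
                · intro _; exact Or.inl (hTcb.mpr hRcb)
                · intro _; exact h2
              · rw [hToff x y (fun h => h.elim hx1 hx2)]
                constructor
                · intro h; exact Or.inl h
                · rintro (h | ⟨rfl, rfl⟩)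
                  · exact h
                  · exact absurd ⟨rfl, rfl⟩ hx1
          exact hf n T S A i b c hT hS hA hb hc (by rw [hIH]; exact hbc4.2.2.2) (fun j hj => (hTj j hj).symm) hws
        · -- S = (T,F): swap (b,c)
          have hws : weaklyStrengthens (T i) (S i) b c := by
            right; right
            intro x y
            by_cases hx1 : x = b ∧ y = c
            · obtain ⟨rfl, rfl⟩ := hx1
              exact iff_of_true h1 (Or.inr ⟨rfl, rfl⟩)
            · by_cases hx2 : x = c ∧ y = b
              · obtain ⟨rfl, rfl⟩ := hx2
                refine iff_of_false h2 ?_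
                rintro (⟨-, h⟩ | ⟨h, -⟩)
                · exact h ⟨rfl, rfl⟩
                · exact hbnec h.symm
              · rw [hToff x y (fun h => h.elim hx1 hx2)]
                constructor
                · intro h; exact Or.inl ⟨h, hx2⟩
                · rintro (⟨h, -⟩ | ⟨rfl, rfl⟩)
                  · exact h
                  · exact absurd ⟨rfl, rfl⟩ hx1
          exact hf n T S A i b c hT hS hA hb hc (by rw [hIH]; exact hbc4.2.2.2) (fun j hj => (hTj j hj).symm) hws
      · -- S i b c false, so S i c b true: swap (c,b)
        have h2 : S i c b := (hS i b c).resolve_left h1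
        have hws : weaklyStrengthens (T i) (S i) c b := by
          right; right
          intro x y
          by_cases hx1 : x = c ∧ y = b
          · obtain ⟨rfl, rfl⟩ := hx1
            exact iff_of_true h2 (Or.inr ⟨rfl, rfl⟩)
          · by_cases hx2 : x = b ∧ y = c
            · obtain ⟨rfl, rfl⟩ := hx2
              refine iff_of_false h1 ?_
              rintro (⟨-, h⟩ | ⟨h, -⟩)
              · exact h ⟨rfl, rfl⟩
              · exact hbnec h
            · rw [hToff x y (fun h => h.elim hx2 hx1)]
              constructor
              · intro h; exact Or.inl ⟨h, hx2⟩
              · rintro (⟨h, -⟩ | ⟨rfl, rfl⟩)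
                · exact h
                · exact absurd ⟨rfl, rfl⟩ hx1
        exact hf n T S A i c b hT hS hA hc hb (by rw [hIH]; exact hbc4.2.2.1) (fun j hj => (hTj j hj).symm) hws
    exact hStep.trans hIH
/-- Set-monotonicity implies independence of unchosen alternatives. -/

theorem setMonotone_iua (f : SCF U) (hf : SetMonotone f) : IUA f := by
  intro n R R' A hR hR' hA hagree
  set R'' : Fin n → U → U → Prop :=
    fun i x y => if x ∈ A ∧ y ∈ A then R' i x y else R i x y with hR''def
  have hR'' : ∀ j, Complete (R'' j) := by
    intro j x y
    by_cases h : x ∈ A ∧ y ∈ A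
    · have h' : y ∈ A ∧ x ∈ A := ⟨h.2, h.1⟩
      simp only [R'', if_pos h, if_pos h']
      exact hR' j x y
    · have h' : ¬(y ∈ A ∧ x ∈ A) := fun hh => h ⟨hh.2, hh.1⟩
      simp only [R'', if_neg h, if_neg h']
      exact hR j x y
  have h1 : f.choice n R' A = f.choice n R'' A := by
    apply f.iia
    intro i a ha b hb
    simp only [R'', if_pos (⟨ha, hb⟩ : a ∈ A ∧ b ∈ A)]
  have hinv : ∀ i x y, ¬(x ∈ A ∧ y ∈ A ∧ x ∉ f.choice n R A ∧ y ∉ f.choice n R A) →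
      (R'' i x y ↔ R i x y) := by
    intro i x y h
    by_cases hxy : x ∈ A ∧ y ∈ A
    · simp only [R'', if_pos hxy]
      by_cases hx : x ∈ f.choice n R A
      · exact ((hagree i x hx y hxy.2).1).symm
      · have hy : y ∈ f.choice n R A := by
          by_contra hy
          exact h ⟨hxy.1, hxy.2, hx, hy⟩
        exact ((hagree i y hy x hxy.1).2).symm
    · simp only [R'', if_neg hxy]
  have h2 : f.choice n R'' A = f.choice n R A :=
    setMonotone_key f hf n R A hR hA _ R'' hR'' hinv rfl
  rw [h1, h2]
end

section
/- Every weakly R̂-strategyproof pairwise SCF satisfies set-monotonicity. Equivalently, every pairwise SCF that violates set-monotonicity is strongly R̂-manipulable by a single voter who only misreports indifferences. -/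
open scoped Classical

variable {U : Type*}

/-! A pairwise SCF sees only the margins, and one voter weakly strengthening `a` against `b`
raises the margin of `a` over `b` by some `c ∈ {0, 1, 2}` and changes no margin but this one and
its negative. The same margins arise by adding `c` voters who strictly prefer `a` to `b` and are
indifferent otherwise. Adding one such voter cannot change the outcome when `b` is unchosen: if
that voter reported complete indifference, pairwiseness would give back the old outcome, which
avoids `b` and is therefore weakly preferred by the voter to anything — a manipulation adding only
indifferences. -/

noncomputable def prefSign (T : U → U → Prop) (x y : U) : ℤ :=
  (if StrictPref T x y then 1 else 0) - (if StrictPref T y x then 1 else 0)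

-- The ballot strictly preferring `a` to `b` and indifferent between all other pairs.
def singlePref (a b : U) : U → U → Prop := fun x y => ¬(x = b ∧ y = a)

section prefSign

variable {T T' : U → U → Prop} {a b x y : U}

lemma prefSign_swap : prefSign T y x = -prefSign T x y := by
  unfold prefSign; ring

lemma prefSign_self : prefSign T x x = 0 := by
  have := prefSign_swap (T := T) (x := x) (y := x); omega

lemma prefSign_congr (hxy : T' x y ↔ T x y) (hyx : T' y x ↔ T y x) :
    prefSign T' x y = prefSign T x y := by
  have hs₁ : StrictPref T' x y ↔ StrictPref T x y := by rw [StrictPref, StrictPref, hxy, hyx]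
  have hs₂ : StrictPref T' y x ↔ StrictPref T y x := by rw [StrictPref, StrictPref, hxy, hyx]
  simp only [prefSign, hs₁, hs₂]

lemma prefSign_top : prefSign (⊤ : U → U → Prop) x y = 0 := by
  simp [prefSign, StrictPref]

lemma prefSign_eq_of_agree_off
    (hT : ∀ x y, ¬(x = a ∧ y = b) → ¬(x = b ∧ y = a) → (T' x y ↔ T x y))
    (h₁ : ¬(x = a ∧ y = b)) (h₂ : ¬(x = b ∧ y = a)) : prefSign T' x y = prefSign T x y :=
  prefSign_congr (hT x y h₁ h₂) (hT y x (fun h => h₂ h.symm) (fun h => h₁ h.symm))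

end prefSign

section weaklyStrengthens

variable {T T' : U → U → Prop} {a b x y : U}

lemma weaklyStrengthens.rel_iff_of_ne (h : weaklyStrengthens T T' a b)
    (h₁ : ¬(x = a ∧ y = b)) (h₂ : ¬(x = b ∧ y = a)) : T' x y ↔ T x y := by
  rcases h with h | h | h <;> simp [h, h₁, h₂]

lemma weaklyStrengthens.prefSign_eq_of_ne (h : weaklyStrengthens T T' a b)
    (h₁ : ¬(x = a ∧ y = b)) (h₂ : ¬(x = b ∧ y = a)) : prefSign T' x y = prefSign T x y :=
  prefSign_eq_of_agree_off (fun _ _ => h.rel_iff_of_ne) h₁ h₂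

lemma prefSign_eq_of_weaklyStrengthens_self (h : weaklyStrengthens T T' a a) :
    prefSign T' x y = prefSign T x y := by
  by_cases hx : x = a ∧ y = a
  · obtain ⟨rfl, rfl⟩ := hx
    rw [prefSign_self, prefSign_self]
  · exact h.prefSign_eq_of_ne hx hx

lemma weaklyStrengthens.prefSign_le (h : weaklyStrengthens T T' a b) (hab : a ≠ b) :
    prefSign T a b ≤ prefSign T' a b := by
  have hab' : T a b → T' a b := by rcases h with h | h | h <;> simp [h]
  have hba' : T' b a → T b a := by rcases h with h | h | h <;> simp [h, hab, hab.symm]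
  unfold prefSign StrictPref
  split_ifs <;> tauto

end weaklyStrengthens

section singlePref

variable {a b x y : U}

lemma top_complete : Complete (⊤ : U → U → Prop) := fun _ _ => Or.inl trivial

lemma singlePref_complete (hab : a ≠ b) : Complete (singlePref a b) := by
  intro x y
  by_cases h : x = b ∧ y = a
  · exact Or.inr fun h' => hab (h'.2.symm.trans h.1)
  · exact Or.inl h

lemma prefSign_singlePref (hab : a ≠ b) : prefSign (singlePref a b) a b = 1 := by
  simp [prefSign, StrictPref, singlePref, hab, hab.symm]

lemma prefSign_singlePref_of_ne (h₁ : ¬(x = a ∧ y = b)) (h₂ : ¬(x = b ∧ y = a)) :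
    prefSign (singlePref a b) x y = 0 :=
  (prefSign_eq_of_agree_off (T := ⊤) (fun _ _ _ h => by simp [singlePref, h]) h₁ h₂).trans
    prefSign_top

end singlePref

lemma weaklyStrengthens.exists_prefSign_eq {T T' : U → U → Prop} {a b : U}
    (h : weaklyStrengthens T T' a b) (hab : a ≠ b) :
    ∃ c : ℕ, ∀ x y, prefSign T' x y = prefSign T x y + c * prefSign (singlePref a b) x y := by
  obtain ⟨c, hc⟩ := Int.eq_ofNat_of_zero_le (sub_nonneg.2 (h.prefSign_le hab))
  refine ⟨c, fun x y => ?_⟩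
  by_cases h₁ : x = a ∧ y = b
  · obtain ⟨rfl, rfl⟩ := h₁
    rw [prefSign_singlePref hab]
    linarith
  by_cases h₂ : x = b ∧ y = a
  · obtain ⟨rfl, rfl⟩ := h₂
    rw [prefSign_swap, prefSign_swap (T := T), prefSign_swap (T := singlePref y x),
      prefSign_singlePref hab]
    linarith
  · rw [h.prefSign_eq_of_ne h₁ h₂, prefSign_singlePref_of_ne h₁ h₂]
    ring

section margin

variable {n : ℕ} (R : Fin n → U → U → Prop) (x y : U)

lemma margin_eq_sum : margin R x y = ∑ j, prefSign (R j) x y := by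
  simp only [margin, prefSign, Finset.card_filter, Finset.sum_sub_distrib]
  push_cast
  rfl

lemma margin_snoc (T : U → U → Prop) :
    margin (Fin.snoc R T : Fin (n + 1) → U → U → Prop) x y = margin R x y + prefSign T x y := by
  simp [margin_eq_sum, Fin.sum_univ_castSucc]

lemma margin_eq_of_eq_off {R' : Fin n → U → U → Prop} {i : Fin n} (h : ∀ j, j ≠ i → R' j = R j) :
    margin R' x y = margin R x y + (prefSign (R' i) x y - prefSign (R i) x y) := by
  rw [margin_eq_sum, margin_eq_sum, ← Finset.add_sum_erase _ _ (Finset.mem_univ i),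
    ← Finset.add_sum_erase _ _ (Finset.mem_univ i),
    Finset.sum_congr rfl fun j hj => by rw [h j (Finset.ne_of_mem_erase hj)]]
  ring

end margin

lemma complete_snoc {n : ℕ} {R : Fin n → U → U → Prop} {T : U → U → Prop}
    (hR : ∀ j, Complete (R j)) (hT : Complete T) :
    ∀ j, Complete ((Fin.snoc R T : Fin (n + 1) → U → U → Prop) j) :=
  Fin.lastCases (by simpa using hT) fun j => by simpa using hR j

lemma choice_snoc_singlePref_eq {f : SCF U} (hsp : WeakKellySP f) {m : ℕ}
    {Q : Fin m → U → U → Prop} (hQ : ∀ j, Complete (Q j)) {A : Finset U} (hA : A.Nonempty)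
    {a b : U} (hab : a ≠ b) (hb : b ∉ f.choice (m + 1) (Fin.snoc Q ⊤) A) :
    f.choice (m + 1) (Fin.snoc Q (singlePref a b)) A = f.choice (m + 1) (Fin.snoc Q ⊤) A := by
  by_contra hne
  refine hsp ⟨m + 1, Fin.snoc Q (singlePref a b), Fin.snoc Q ⊤, A, Fin.last m,
    complete_snoc hQ (singlePref_complete hab), complete_snoc hQ top_complete, hA,
    fun j hj => ?_, fun _ _ _ => by simp [Indiff], Ne.symm hne, ?_⟩
  · obtain ⟨k, rfl⟩ := Fin.exists_castSucc_eq.2 hj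
    simp
  · rintro x hx y -
    simp only [Fin.snoc_last, singlePref]
    rintro ⟨rfl, rfl⟩
    exact hb hx

lemma exists_profile_margin_add_singlePref {f : SCF U} (hp : PairwiseSCF f) (hsp : WeakKellySP f)
    {n : ℕ} {R : Fin n → U → U → Prop} (hR : ∀ j, Complete (R j)) {A : Finset U}
    (hA : A.Nonempty) {a b : U} (hab : a ≠ b) (hb : b ∉ f.choice n R A) (k : ℕ) :
    ∃ (m : ℕ) (Q : Fin m → U → U → Prop), (∀ j, Complete (Q j)) ∧
      (∀ x y, margin Q x y = margin R x y + k * prefSign (singlePref a b) x y) ∧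
      f.choice m Q A = f.choice n R A := by
  induction k with
  | zero => exact ⟨n, R, hR, fun x y => by simp, rfl⟩
  | succ k ih =>
    obtain ⟨m, Q, hQ, hmargin, hchoice⟩ := ih
    have hindiff : f.choice (m + 1) (Fin.snoc Q ⊤) A = f.choice m Q A :=
      hp _ _ _ _ A (complete_snoc hQ top_complete) hQ fun x _ y _ => by
        rw [margin_snoc, prefSign_top, add_zero]
    refine ⟨m + 1, Fin.snoc Q (singlePref a b), complete_snoc hQ (singlePref_complete hab),
      fun x y => ?_, ?_⟩
    · rw [margin_snoc, hmargin]
      push_cast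
      ring
    · rw [choice_snoc_singlePref_eq hsp hQ hA hab (by rwa [hindiff, hchoice]), hindiff, hchoice]

/-- Every weakly R̂-strategyproof pairwise SCF satisfies set-monotonicity. -/
theorem pairwise_weakSP_setMonotone (f : SCF U)
    (hp : PairwiseSCF f) (hsp : WeakKellySP f) : SetMonotone f := by
  intro n R R' A i a b hR hR' hA _ _ hb hR'i hws
  rcases eq_or_ne a b with rfl | hab
  · exact hp n n R' R A hR' hR fun x _ y _ => by
      rw [margin_eq_of_eq_off R x y hR'i, prefSign_eq_of_weaklyStrengthens_self hws, sub_self, add_zero]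
  · obtain ⟨c, hc⟩ := hws.exists_prefSign_eq hab
    obtain ⟨m, Q, hQ, hmargin, hchoice⟩ :=
      exists_profile_margin_add_singlePref hp hsp hR hA hab hb c
    rw [← hchoice]
    exact hp n m R' Q A hR' hQ fun x _ y _ => by
      rw [margin_eq_of_eq_off R x y hR'i, hc, hmargin]
      ring
end

section
/- Every weakly R̂-strategyproof pairwise SCF satisfies IUA (independence of unchosen alternatives). -/
open scoped Classical

variable {U : Type*}

/-! ### Auxiliary lemmas -/

lemma margin_self {n : ℕ} (R : Fin n → U → U → Prop) (a : U) : margin R a a = 0 := by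
  simp [margin, StrictPref]

lemma margin_antisymm {n : ℕ} (R : Fin n → U → U → Prop) (a b : U) :
    margin R a b = - margin R b a := by
  unfold margin; ring

lemma card_filter_snoc {n : ℕ} (p : Fin (n + 1) → Prop) :
    ((Finset.univ.filter p).card : ℤ)
      = ((Finset.univ.filter (fun i : Fin n => p i.castSucc)).card : ℤ)
        + (if p (Fin.last n) then 1 else 0) := by
  rw [Finset.card_filter, Finset.card_filter]
  push_cast
  rw [Fin.sum_univ_castSucc]

lemma margin_snoc_s8 {n : ℕ} (R : Fin n → U → U → Prop) (P : U → U → Prop) (c d : U) :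
    margin (Fin.snoc R P) c d = margin R c d
      + (if StrictPref P c d then 1 else 0) - (if StrictPref P d c then 1 else 0) := by
  unfold margin
  rw [card_filter_snoc, card_filter_snoc]
  simp only [Fin.snoc_castSucc, Fin.snoc_last]
  ring

lemma snoc_complete {n : ℕ} {R : Fin n → U → U → Prop} (hR : ∀ j, Complete (R j))
    {P : U → U → Prop} (hP : Complete P) : ∀ j, Complete ((Fin.snoc R P : Fin (n + 1) → U → U → Prop) j) := by
  intro j
  refine Fin.lastCases ?_ ?_ j
  · simpa [Fin.snoc_last] using hP
  · intro i; simpa [Fin.snoc_castSucc] using hR i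

lemma Tpref_complete {a b : U} (hab : a ≠ b) :
    Complete (fun x y : U => ¬(x = b ∧ y = a)) := by
  intro x y
  by_cases h : x = b ∧ y = a
  · right; rintro ⟨h1, h2⟩; exact hab (h2.symm.trans h.1)
  · left; exact h

lemma strictPref_Tpref {a b : U} (hab : a ≠ b) (c d : U) :
    StrictPref (fun x y : U => ¬(x = b ∧ y = a)) c d ↔ (c = a ∧ d = b) := by
  unfold StrictPref
  constructor
  · rintro ⟨h1, h2⟩
    rcases not_not.mp h2 with ⟨hdb, hca⟩
    exact ⟨hca, hdb⟩
  · rintro ⟨rfl, rfl⟩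
    exact ⟨fun h => hab h.1, not_not.mpr ⟨rfl, rfl⟩⟩

lemma margin_snoc_T {n : ℕ} (R : Fin n → U → U → Prop) {a b : U} (hab : a ≠ b) (c d : U) :
    margin (Fin.snoc R (fun x y : U => ¬(x = b ∧ y = a))) c d = margin R c d
      + (if c = a ∧ d = b then 1 else 0) - (if c = b ∧ d = a then 1 else 0) := by
  rw [margin_snoc_s8]
  have e1 : StrictPref (fun x y : U => ¬(x = b ∧ y = a)) c d ↔ (c = a ∧ d = b) :=
    strictPref_Tpref hab c d
  have e2 : StrictPref (fun x y : U => ¬(x = b ∧ y = a)) d c ↔ (c = b ∧ d = a) :=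
    (strictPref_Tpref hab d c).trans (by tauto)
  rw [if_congr e1 rfl rfl, if_congr e2 rfl rfl]

/-- Step lemma: adding one extra voter who is indifferent everywhere except for a strict
preference of `a` over `b`, where `b` is unchosen, does not change the outcome. -/
lemma step_lemma (f : SCF U) (hp : PairwiseSCF f) (hsp : WeakKellySP f)
    {n : ℕ} (R : Fin n → U → U → Prop) (hR : ∀ j, Complete (R j))
    (A : Finset U) (hA : A.Nonempty) {a b : U}
    (hab : a ≠ b) (hbX : b ∉ f.choice n R A) :
    f.choice (n + 1) (Fin.snoc R (fun x y : U => ¬(x = b ∧ y = a))) A = f.choice n R A := by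
  set T : U → U → Prop := fun x y => ¬(x = b ∧ y = a) with hT
  set I : U → U → Prop := fun _ _ => True with hI
  have hIcomp : Complete I := fun _ _ => Or.inl trivial
  have hTcomp : Complete T := Tpref_complete hab
  have hcompT := snoc_complete hR hTcomp
  have hcompI := snoc_complete hR hIcomp
  have hIeq : f.choice (n + 1) (Fin.snoc R I) A = f.choice n R A := by
    apply hp _ _ _ _ _ hcompI hR
    intro c hc d hd
    rw [margin_snoc_s8]
    simp [hI, StrictPref]
  by_contra hne
  apply hsp
  refine ⟨n + 1, Fin.snoc R T, Fin.snoc R I, A, Fin.last n, hcompT, hcompI, hA, ?_, ?_, ?_, ?_⟩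
  · intro j hj
    induction j using Fin.lastCases with
    | last => exact absurd rfl hj
    | cast k => simp [Fin.snoc_castSucc]
  · intro x y _
    simp [Indiff, Fin.snoc_last, hI]
  · rw [hIeq]
    exact fun h => hne h.symm
  · rw [hIeq]
    intro x hx y hy
    simp only [Fin.snoc_last, hT]
    rintro ⟨hxb, hya⟩
    exact hbX (hxb ▸ hx)

/-- Key lemma: bounded induction on total margin disagreement over feasible pairs. -/
lemma key_lemma (f : SCF U) (hp : PairwiseSCF f) (hsp : WeakKellySP f)
    {m : ℕ} (R' : Fin m → U → U → Prop) (hR' : ∀ j, Complete (R' j))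
    (A : Finset U) (hA : A.Nonempty) :
    ∀ (D n : ℕ) (R : Fin n → U → U → Prop), (∀ j, Complete (R j)) →
      (∀ a ∈ A, ∀ b ∈ A, (a ∈ f.choice n R A ∨ b ∈ f.choice n R A) →
        margin R a b = margin R' a b) →
      (∑ p ∈ A ×ˢ A, (margin R' p.1 p.2 - margin R p.1 p.2).natAbs) < D →
      f.choice n R A = f.choice m R' A := by
  intro D
  induction D with
  | zero => intro n R _ _ h; omega
  | succ D ih =>
    intro n R hR hmarg hsum
    by_cases h0 : ∀ a ∈ A, ∀ b ∈ A, margin R a b = margin R' a b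
    · exact hp n m R R' A hR hR' h0
    · push_neg at h0
      obtain ⟨a₀, ha₀, b₀, hb₀, hne₀⟩ := h0
      obtain ⟨a, ha, b, hb, hpos⟩ :
          ∃ a ∈ A, ∃ b ∈ A, 0 < margin R' a b - margin R a b := by
        rcases (sub_ne_zero.mpr (Ne.symm hne₀)).lt_or_gt with h | h
        · refine ⟨b₀, hb₀, a₀, ha₀, ?_⟩
          rw [margin_antisymm R' b₀ a₀, margin_antisymm R b₀ a₀]
          linarith
        · exact ⟨a₀, ha₀, b₀, hb₀, h⟩
      have hab : a ≠ b := by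
        rintro rfl
        simp [margin_self] at hpos
      have haX : a ∉ f.choice n R A := fun hmem => by
        have := hmarg a ha b hb (Or.inl hmem); omega
      have hbX : b ∉ f.choice n R A := fun hmem => by
        have := hmarg a ha b hb (Or.inr hmem); omega
      set T : U → U → Prop := fun x y => ¬(x = b ∧ y = a) with hT
      set R₂ : Fin (n + 1) → U → U → Prop := Fin.snoc R T with hR₂def
      have hstep : f.choice (n + 1) R₂ A = f.choice n R A :=
        step_lemma f hp hsp R hR A hA hab hbX
      have hcomp₂ : ∀ j, Complete (R₂ j) := snoc_complete hR (Tpref_complete hab)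
      have hm₂ : ∀ c d : U, margin R₂ c d = margin R c d
          + (if c = a ∧ d = b then 1 else 0) - (if c = b ∧ d = a then 1 else 0) :=
        fun c d => margin_snoc_T R hab c d
      have hmarg₂ : ∀ c ∈ A, ∀ d ∈ A,
          (c ∈ f.choice (n + 1) R₂ A ∨ d ∈ f.choice (n + 1) R₂ A) →
          margin R₂ c d = margin R' c d := by
        intro c hc d hd hmem
        rw [hstep] at hmem
        have h1 : ¬(c = a ∧ d = b) := by
          rintro ⟨rfl, rfl⟩
          rcases hmem with h | h
          · exact haX h
          · exact hbX h
        have h2 : ¬(c = b ∧ d = a) := by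
          rintro ⟨rfl, rfl⟩
          rcases hmem with h | h
          · exact hbX h
          · exact haX h
        rw [hm₂, if_neg h1, if_neg h2]
        have := hmarg c hc d hd hmem
        omega
      have hsum₂ : (∑ p ∈ A ×ˢ A, (margin R' p.1 p.2 - margin R₂ p.1 p.2).natAbs)
          < (∑ p ∈ A ×ˢ A, (margin R' p.1 p.2 - margin R p.1 p.2).natAbs) := by
        have hneg : margin R' b a - margin R b a = -(margin R' a b - margin R a b) := by
          rw [margin_antisymm R' b a, margin_antisymm R b a]; ring
        apply Finset.sum_lt_sum
        · rintro ⟨c, d⟩ _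
          dsimp only
          rw [hm₂]
          by_cases h1 : c = a ∧ d = b
          · have h2 : ¬(c = b ∧ d = a) := by
              rintro ⟨hb', ha'⟩; exact hab (h1.1.symm.trans hb')
            rw [if_pos h1, if_neg h2]
            have e : 0 < margin R' c d - margin R c d := by rw [h1.1, h1.2]; exact hpos
            omega
          · rw [if_neg h1]
            by_cases h2 : c = b ∧ d = a
            · rw [if_pos h2]
              have e : margin R' c d - margin R c d = -(margin R' a b - margin R a b) := by
                rw [h2.1, h2.2]; exact hneg
              omega
            · rw [if_neg h2]; omega
        · refine ⟨(a, b), Finset.mem_product.mpr ⟨ha, hb⟩, ?_⟩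
          dsimp only
          rw [hm₂]
          have h2 : ¬(a = b ∧ b = a) := fun h => hab h.1
          rw [if_pos ⟨rfl, rfl⟩, if_neg h2]
          omega
      rw [← hstep]
      exact ih (n + 1) R₂ hcomp₂ hmarg₂ (lt_of_lt_of_le hsum₂ (Nat.lt_succ_iff.mp hsum))

/-- Every weakly R̂-strategyproof pairwise SCF satisfies IUA. -/
theorem pairwise_weakSP_iua (f : SCF U)
    (hp : PairwiseSCF f) (hsp : WeakKellySP f) : IUA f := by
  intro n R R' A hR hR' hA hagree
  have hmarg : ∀ a ∈ A, ∀ b ∈ A, (a ∈ f.choice n R A ∨ b ∈ f.choice n R A) →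
      margin R a b = margin R' a b := by
    intro a ha b hb hmem
    have hiff : ∀ i, (R i a b ↔ R' i a b) ∧ (R i b a ↔ R' i b a) := by
      intro i
      rcases hmem with h | h
      · exact hagree i a h b hb
      · exact ⟨(hagree i b h a ha).2, (hagree i b h a ha).1⟩
    have e1 : (Finset.univ.filter fun i : Fin n => StrictPref (R i) a b)
        = Finset.univ.filter fun i : Fin n => StrictPref (R' i) a b := by
      apply Finset.filter_congr
      intro i _
      simp only [StrictPref, (hiff i).1, (hiff i).2]
    have e2 : (Finset.univ.filter fun i : Fin n => StrictPref (R i) b a)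
        = Finset.univ.filter fun i : Fin n => StrictPref (R' i) b a := by
      apply Finset.filter_congr
      intro i _
      simp only [StrictPref, (hiff i).1, (hiff i).2]
    unfold margin
    rw [e1, e2]
  exact (key_lemma f hp hsp R' hR' A hA
    ((∑ p ∈ A ×ˢ A, (margin R' p.1 p.2 - margin R p.1 p.2).natAbs) + 1) n R hR hmarg
    (Nat.lt_succ_self _)).symm
end

section
/- Every weakly P̂-strategyproof pairwise SCF satisfies P̂-participation: there is no feasible set A, profile R = (R_1,...,R_n), and additional preference relation R_{n+1} such that f(R,A) P̂_{n+1} f((R_1,...,R_n,R_{n+1}),A), i.e., no voter can obtain a strictly Kelly-preferred outcome by abstaining. -/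
open scoped Classical

variable {U : Type*}

/-- Every weakly P̂-strategyproof pairwise SCF satisfies P̂-participation:
no voter can obtain a strictly Kelly-preferred outcome by abstaining. -/
theorem pairwise_weakPSP_participation (f : SCF U)
    (hp : PairwiseSCF f) (hsp : WeakKellyPSP f) :
    ¬ ∃ (n : ℕ) (R : Fin (n + 1) → U → U → Prop) (A : Finset U),
      (∀ j, Complete (R j)) ∧ A.Nonempty ∧
      KellyP (R (Fin.last n))
        (f.choice n (fun i => R i.castSucc) A)
        (f.choice (n + 1) R A) := by
  rintro ⟨n, R, A, hC, hA, hK⟩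
  -- R' : voter `last` reports full indifference
  set R' : Fin (n + 1) → U → U → Prop :=
    fun j => if j = Fin.last n then (fun _ _ => True) else R j with hR'
  have hC' : ∀ j, Complete (R' j) := by
    intro j a b
    by_cases h : j = Fin.last n <;> simp [hR', h]
    exact hC j a b
  -- f at R' equals f at the reduced profile
  have hmar : ∀ a ∈ A, ∀ b ∈ A,
      margin R' a b = margin (fun i : Fin n => R i.castSucc) a b := by
    intro a _ b _
    have key : ∀ x y : U,
        (Finset.univ.filter fun i : Fin (n+1) => StrictPref (R' i) x y).card =
        (Finset.univ.filter fun i : Fin n => StrictPref (R i.castSucc) x y).card := by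
      intro x y
      rw [Finset.card_filter, Finset.card_filter, Fin.sum_univ_castSucc]
      have hlast : StrictPref (R' (Fin.last n)) x y = False := by
        simp [hR', StrictPref]
      have hcast : ∀ i : Fin n, R' i.castSucc = R i.castSucc := by
        intro i
        simp [hR', (Fin.castSucc_lt_last i).ne]
      simp [hlast, hcast]
    simp [margin, key]
  have heq : f.choice (n + 1) R' A = f.choice n (fun i => R i.castSucc) A :=
    hp (n + 1) n R' (fun i => R i.castSucc) A hC' (fun j => hC j.castSucc) hmar
  have hne : f.choice (n + 1) R' A ≠ f.choice (n + 1) R A := by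
    rw [heq]
    rintro h
    obtain ⟨hKR, x, hx, y, hy, hxy⟩ := hK
    rw [← h] at hy
    exact hxy.2 (hKR y hy x (h ▸ hx))
  exact hsp ⟨n + 1, R, R', A, Fin.last n, hC, hC', hA,
    fun j hj => by simp [hR', hj],
    fun a b _ => by simp [hR', Indiff],
    hne, by rw [heq]; exact hK⟩
end

section
/- In the 3m-voter profile R over A = {a_1,...,a_m} (m ≥ 3) where for each i there are two voters ranking a_i strictly below all other alternatives (indifferent among the rest) and one voter ranking a_{i+1} (indices mod m) strictly below a_i, which in turn is strictly below all other alternatives (indifferent among the rest), no alternative is a Condorcet winner; moreover, if voters 3 and 4 (the two voters ranking a_1 last among those associated with a_1) both lift a_1 to the top of their rankings, then a_1 becomes the Condorcet winner. -/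
open scoped Classical

variable {U : Type*}

/-! Counting complements, `c` beats `b` exactly when fewer voters reject `c ≽ b` than reject
`b ≽ c`. In the cyclic profile only the three voters ranking `a (j - 1)` last reject
`a (j - 1) ≽ a j`, while the three voters ranking `a j` last reject `a j ≽ a (j - 1)`, so `a j`
does not beat `a (j - 1)`. After the lift, only the voters `(-1, 2)` and `(0, 2)` can reject
`a 0 ≽ a l`, while the two lifters and the three voters ranking `a l` last reject
`a l ≽ a 0`. -/

open Finset

theorem condorcetWinner_iff_card_filter_not {V : Type*} [Fintype V] (R : V → U → U → Prop)
    (A : Finset U) (c : U) :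
    CondorcetWinner R A c ↔ c ∈ A ∧ ∀ b ∈ A, b ≠ c → #{v | ¬R v c b} < #{v | ¬R v b c} := by
  refine and_congr_right fun _ => forall₂_congr fun b _ => imp_congr_right fun _ => ?_
  have hcb := card_filter_add_card_filter_not (s := (univ : Finset V)) (fun v => R v c b)
  have hbc := card_filter_add_card_filter_not (s := (univ : Finset V)) (fun v => R v b c)
  omega

theorem Fin.sub_one_ne_self {m : ℕ} [NeZero m] (hm : 1 < m) (j : Fin m) : j - 1 ≠ j := by
  rw [Ne, sub_eq_self, Fin.ext_iff, Fin.val_one', Fin.val_zero, Nat.mod_eq_of_lt hm]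
  exact one_ne_zero

section CyclicProfile

variable {m : ℕ} [NeZero m]

noncomputable def cyclicRank (a : Fin m → U) (k : Fin m) (x : U) : ℕ :=
  if x = a (k + 1) then 2 else if x = a k then 1 else 0

def cyclicProfile (a : Fin m → U) (v : Fin m × Fin 3) (x y : U) : Prop :=
  if v.2 = 2 then cyclicRank a v.1 x ≤ cyclicRank a v.1 y else ¬(x = a v.1 ∧ y ≠ a v.1)

def liftedProfile (a : Fin m → U) (v : Fin m × Fin 3) (x y : U) : Prop :=
  if v.1 = 0 ∧ v.2 ≠ 2 then ¬(y = a 0 ∧ x ≠ a 0) else cyclicProfile a v x y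

variable {a : Fin m → U}

theorem not_cyclicProfile_iff (ha : a.Injective) {j l : Fin m} (hjl : j ≠ l) (k : Fin m)
    (t : Fin 3) :
    ¬cyclicProfile a (k, t) (a j) (a l) ↔
      if t = 2 then j = k + 1 ∨ (j = k ∧ l ≠ k + 1) else j = k := by
  unfold cyclicProfile cyclicRank
  split_ifs <;> grind [ha.eq_iff]

theorem not_condorcetWinner_cyclicProfile (hm : 1 < m) (ha : a.Injective) (c : U) :
    ¬CondorcetWinner (cyclicProfile a) (univ.image a) c := by
  rw [condorcetWinner_iff_card_filter_not]
  rintro ⟨hc, hwin⟩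
  obtain ⟨j, -, rfl⟩ := mem_image.mp hc
  have hpred := Fin.sub_one_ne_self hm j
  refine (hwin (a (j - 1)) (mem_image_of_mem a (mem_univ _)) (ha.ne hpred)).not_ge ?_
  calc #{v | ¬cyclicProfile a v (a (j - 1)) (a j)}
      ≤ #({(j - 1, 0), (j - 1, 1), (j - 2, 2)} : Finset (Fin m × Fin 3)) := by
        refine card_le_card fun ⟨k, t⟩ hv => ?_
        simp only [mem_filter, mem_univ, true_and, not_cyclicProfile_iff ha hpred] at hv
        simp only [mem_insert, mem_singleton, Prod.mk.injEq]
        grind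
    _ ≤ 3 := card_le_three
    _ = #({(j, 0), (j, 1), (j - 1, 2)} : Finset (Fin m × Fin 3)) := by
        rw [card_insert_of_notMem (by simp), card_pair (by simp)]
    _ ≤ #{v | ¬cyclicProfile a v (a j) (a (j - 1))} := by
        refine card_le_card fun ⟨k, t⟩ hv => ?_
        simp only [mem_filter, mem_univ, true_and, not_cyclicProfile_iff ha hpred.symm]
        simp only [mem_insert, mem_singleton, Prod.mk.injEq] at hv
        grind

theorem not_liftedProfile_iff (ha : a.Injective) {j l : Fin m} (hjl : j ≠ l) (k : Fin m)
    (t : Fin 3) :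
    ¬liftedProfile a (k, t) (a j) (a l) ↔
      if k = 0 ∧ t ≠ 2 then l = 0 else ¬cyclicProfile a (k, t) (a j) (a l) := by
  unfold liftedProfile
  split_ifs <;> grind [ha.eq_iff]

theorem condorcetWinner_liftedProfile (ha : a.Injective) :
    CondorcetWinner (liftedProfile a) (univ.image a) (a 0) := by
  rw [condorcetWinner_iff_card_filter_not]
  refine ⟨mem_image_of_mem a (mem_univ 0), fun b hb hb0 => ?_⟩
  obtain ⟨l, -, rfl⟩ := mem_image.mp hb
  have hl : l ≠ 0 := fun h => hb0 (congrArg a h)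
  calc #{v | ¬liftedProfile a v (a 0) (a l)}
      ≤ #({(-1, 2), (0, 2)} : Finset (Fin m × Fin 3)) := by
        refine card_le_card fun ⟨k, t⟩ hv => ?_
        simp only [mem_filter, mem_univ, true_and, not_liftedProfile_iff ha hl.symm,
          not_cyclicProfile_iff ha hl.symm] at hv
        simp only [mem_insert, mem_singleton, Prod.mk.injEq]
        grind
    _ ≤ 2 := card_le_two
    _ < 5 := by norm_num
    _ = #({(0, 0), (0, 1), (l, 0), (l, 1), (l - 1, 2)} : Finset (Fin m × Fin 3)) := by
        rw [card_insert_of_notMem (by simp [hl.symm]), card_insert_of_notMem (by simp [hl.symm]),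
          card_insert_of_notMem (by simp), card_pair (by simp)]
    _ ≤ #{v | ¬liftedProfile a v (a l) (a 0)} := by
        refine card_le_card fun ⟨k, t⟩ hv => ?_
        simp only [mem_filter, mem_univ, true_and, not_liftedProfile_iff ha hl,
          not_cyclicProfile_iff ha hl]
        simp only [mem_insert, mem_singleton, Prod.mk.injEq] at hv
        grind

end CyclicProfile

/-- In the 3m-voter profile of the paper (two voters rank each `a k` strictly last and are
otherwise indifferent; one voter ranks `a (k+1)` strictly below `a k`, which is strictly below
all others, and is otherwise indifferent), there is no Condorcet winner; but if the two voters
ranking `a 0` last lift `a 0` to the top, then `a 0` becomes the Condorcet winner. -/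
theorem paper_profile_condorcet {U : Type*} (m : ℕ) [NeZero m] (hm : 3 ≤ m)
    (a : Fin m → U) (ha : Function.Injective a)
    (A : Finset U) (hA : A = Finset.univ.image a)
    (rk : Fin m → U → ℕ)
    (hrk : ∀ k x, rk k x = if x = a (k + 1) then 2 else if x = a k then 1 else 0)
    (R : Fin m × Fin 3 → U → U → Prop)
    (hR2 : ∀ k : Fin m, R (k, 2) = fun x y => rk k x ≤ rk k y)
    (hR01 : ∀ (k : Fin m) (t : Fin 3), t ≠ 2 → R (k, t) = fun x y => ¬(x = a k ∧ y ≠ a k))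
    (R' : Fin m × Fin 3 → U → U → Prop)
    (hR'lift : ∀ t : Fin 3, t ≠ 2 → R' (0, t) = fun x y => ¬(y = a 0 ∧ x ≠ a 0))
    (hR'rest : ∀ v : Fin m × Fin 3, ¬(v.1 = 0 ∧ v.2 ≠ 2) → R' v = R v) :
    (∀ c : U, ¬ CondorcetWinner R A c) ∧ CondorcetWinner R' A (a 0) := by
  have hR : R = cyclicProfile a := by
    funext ⟨k, t⟩ x y
    by_cases ht : t = 2
    · subst ht
      simp only [cyclicProfile, cyclicRank, hR2, hrk, if_true]
    · rw [cyclicProfile, if_neg ht, hR01 k t ht]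
  have hR' : R' = liftedProfile a := by
    funext ⟨k, t⟩ x y
    by_cases hv : k = 0 ∧ t ≠ 2
    · obtain ⟨rfl, ht⟩ := hv
      rw [liftedProfile, if_pos ⟨rfl, ht⟩, hR'lift t ht]
    · rw [liftedProfile, if_neg hv, hR'rest (k, t) hv, hR]
  subst hA hR hR'
  exact ⟨not_condorcetWinner_cyclicProfile (by omega) ha, condorcetWinner_liftedProfile ha⟩
end
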